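/- Descent identity for the GEORCE update: Let x be a feasible curve with velocities u_t := x_{t+1} − x_t, let (ũ, μ) be its GEORCE update, and set Δu_t := ũ_t − u_t and Δx_t := Σ_{j=0}^{t−1} Δu_j (so that Δx_0 = Δx_T = 0). Then the derivative at α = 0 of the function α ↦ E(x + α Δx) equals −2 Σ_{t=0}^{T−1} Δu_tᵀ G(x_t) Δu_t. In particular this derivative is ≤ 0, with equality if and only if ũ_t = u_t for all t. -/

import Mathlib

open Matrix

/-- Reinterpret a vector in `Fin d → ℝ` as a point of `EuclideanSpace ℝ (Fin d)`
(the two types are definitionally equal). -/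
def toE (d : ℕ) (v : Fin d → ℝ) : EuclideanSpace ℝ (Fin d) := WithLp.toLp 2 v

/-- The discretized energy functional. -/
noncomputable def energy (d T : ℕ)
    (G : EuclideanSpace ℝ (Fin d) → Matrix (Fin d) (Fin d) ℝ)
    (x : ℕ → EuclideanSpace ℝ (Fin d)) : ℝ :=
  ∑ t ∈ Finset.range T, (x (t + 1) - x t) ⬝ᵥ (G (x t)).mulVec (x (t + 1) - x t)

/-- Descent identity for the GEORCE update: if `(ũ, μ)` solves the GEORCE system for
the feasible curve `x` with velocities `u_t = x_{t+1} - x_t`, and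
`Δu_t = ũ_t - u_t`, `Δx_t = ∑_{j<t} Δu_j`, then the derivative at `α = 0` of
`α ↦ E(x + α Δx)` equals `-2 ∑_t Δu_tᵀ G(x_t) Δu_t`; in particular it is `≤ 0`,
with equality iff `ũ_t = u_t` for all `t`. -/
theorem georce_descent_identity
    (d T : ℕ) (hd : 1 ≤ d) (hT : 2 ≤ T)
    (a b : EuclideanSpace ℝ (Fin d))
    (G : EuclideanSpace ℝ (Fin d) → Matrix (Fin d) (Fin d) ℝ)
    (hGsmooth : ∀ i j, ContDiff ℝ (⊤ : ℕ∞) fun y => G y i j)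
    (hGsym : ∀ y, (G y).IsSymm)
    (hGpos : ∀ y, (G y).PosDef)
    (x : ℕ → EuclideanSpace ℝ (Fin d))
    (hx0 : x 0 = a) (hxT : x T = b)
    (u : ℕ → EuclideanSpace ℝ (Fin d)) (hu : ∀ t, u t = x (t + 1) - x t)
    (utilde μ : ℕ → EuclideanSpace ℝ (Fin d))
    (hsys1 : ∀ t < T, (2 : ℝ) • toE d ((G (x t)).mulVec (utilde t)) + μ t = 0)
    (hsys2 : ∀ t, 1 ≤ t → t ≤ T - 1 →
      gradient (fun y => u t ⬝ᵥ (G y).mulVec (u t)) (x t) + μ t = μ (t - 1))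
    (hsys3 : ∑ t ∈ Finset.range T, utilde t = b - a)
    (Δu : ℕ → EuclideanSpace ℝ (Fin d)) (hΔu : ∀ t, Δu t = utilde t - u t)
    (Δx : ℕ → EuclideanSpace ℝ (Fin d)) (hΔx : ∀ t, Δx t = ∑ j ∈ Finset.range t, Δu j) :
    deriv (fun α : ℝ => energy d T G (fun t => x t + α • Δx t)) 0
        = -2 * ∑ t ∈ Finset.range T, Δu t ⬝ᵥ (G (x t)).mulVec (Δu t) ∧
    deriv (fun α : ℝ => energy d T G (fun t => x t + α • Δx t)) 0 ≤ 0 ∧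
    (deriv (fun α : ℝ => energy d T G (fun t => x t + α • Δx t)) 0 = 0 ↔
      ∀ t < T, utilde t = u t) := by
  classical
  -- the linearization of the quadratic form `y ↦ u_t ⬝ G(y) u_t`
  set L : ℕ → (EuclideanSpace ℝ (Fin d) →L[ℝ] ℝ) := fun t =>
    ∑ i : Fin d, ∑ j : Fin d, (u t i * u t j) • fderiv ℝ (fun y => G y i j) (x t) with hL
  set S : ℝ := ∑ t ∈ Finset.range T,
    (Δu t ⬝ᵥ (G (x t)).mulVec (u t) + u t ⬝ᵥ (G (x t)).mulVec (Δu t) + (L t) (Δx t)) with hSdef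
  -- basic facts
  have hΔxsucc : ∀ t, Δx (t + 1) = Δx t + Δu t := by
    intro t; rw [hΔx, hΔx, Finset.sum_range_succ]
  have hΔx0 : Δx 0 = 0 := by simp [hΔx]
  have hΔxT : Δx T = 0 := by
    have hsumu : ∑ t ∈ Finset.range T, u t = x T - x 0 := by
      simp only [hu]; exact Finset.sum_range_sub x T
    rw [hΔx]
    simp only [hΔu]
    rw [Finset.sum_sub_distrib, hsys3, hsumu, hx0, hxT, sub_self]
  -- pointwise description of the perturbed velocities
  have hvec : ∀ (t : ℕ) (α : ℝ) (k : Fin d),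
      ((x (t + 1) + α • Δx (t + 1)) - (x t + α • Δx t)) k = u t k + α * Δu t k := by
    intro t α k
    rw [hΔxsucc t]
    have hu' : u t k = x (t + 1) k - x t k := by rw [hu]; rfl
    simp [PiLp.add_apply, PiLp.sub_apply, PiLp.smul_apply, smul_eq_mul, hu']
    ring
  -- derivative of the path
  have hpath : ∀ t : ℕ, HasDerivAt (fun α : ℝ => x t + α • Δx t) (Δx t) 0 := by
    intro t
    simpa using ((hasDerivAt_id (0 : ℝ)).smul_const (Δx t)).const_add (x t)
  -- derivative of each matrix entry along the path
  have hGd : ∀ (t : ℕ) (i j : Fin d),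
      HasDerivAt (fun α : ℝ => G (x t + α • Δx t) i j)
        ((fderiv ℝ (fun y => G y i j) (x t)) (Δx t)) 0 := by
    intro t i j
    have hd' : HasFDerivAt (fun y => G y i j) (fderiv ℝ (fun y => G y i j) (x t))
        (x t + (0 : ℝ) • Δx t) := by
      simpa using (((hGsmooth i j).differentiable (by simp)) (x t)).hasFDerivAt
    exact hd'.comp_hasDerivAt (0 : ℝ) (hpath t)
  -- expand the dot product of a quadratic form into a double sum
  have hdot : ∀ (v w : Fin d → ℝ) (M : Matrix (Fin d) (Fin d) ℝ),
      v ⬝ᵥ M *ᵥ w = ∑ i : Fin d, ∑ j : Fin d, v i * (M i j * w j) := by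
    intro v w M
    simp [dotProduct, mulVec, Finset.mul_sum]
  -- the key derivative computation
  have key : HasDerivAt (fun α : ℝ => energy d T G (fun t => x t + α • Δx t)) S 0 := by
    have hfun : (fun α : ℝ => energy d T G (fun t => x t + α • Δx t))
        = fun α : ℝ => ∑ t ∈ Finset.range T, ∑ i : Fin d, ∑ j : Fin d,
            (u t i + α * Δu t i) * (G (x t + α • Δx t) i j * (u t j + α * Δu t j)) := by
      funext α
      unfold energy
      refine Finset.sum_congr rfl fun t _ => ?_
      rw [hdot]
      refine Finset.sum_congr rfl fun i _ => Finset.sum_congr rfl fun j _ => ?_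
      rw [← hvec t α i, ← hvec t α j]; rfl
    have hS' : S = ∑ t ∈ Finset.range T, ∑ i : Fin d, ∑ j : Fin d,
        (Δu t i * (G (x t) i j * u t j)
          + u t i * ((fderiv ℝ (fun y => G y i j) (x t)) (Δx t) * u t j
              + G (x t) i j * Δu t j)) := by
      rw [hSdef]
      refine Finset.sum_congr rfl fun t _ => ?_
      have e3 : (L t) (Δx t)
          = ∑ i : Fin d, ∑ j : Fin d,
              u t i * ((fderiv ℝ (fun y => G y i j) (x t)) (Δx t) * u t j) := by
        rw [hL]
        simp only [ContinuousLinearMap.coe_sum', Finset.sum_apply,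
          ContinuousLinearMap.coe_smul', Pi.smul_apply, smul_eq_mul]
        exact Finset.sum_congr rfl fun i _ => Finset.sum_congr rfl fun j _ => by ring
      rw [hdot, hdot, e3, ← Finset.sum_add_distrib, ← Finset.sum_add_distrib]
      refine Finset.sum_congr rfl fun i _ => ?_
      rw [← Finset.sum_add_distrib, ← Finset.sum_add_distrib]
      exact Finset.sum_congr rfl fun j _ => by ring
    rw [hfun, hS']
    refine HasDerivAt.fun_sum fun t _ => HasDerivAt.fun_sum fun i _ => HasDerivAt.fun_sum fun j _ => ?_
    have h1 : HasDerivAt (fun α : ℝ => u t i + α * Δu t i) (Δu t i) 0 := by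
      simpa using ((hasDerivAt_id (0 : ℝ)).mul_const (Δu t i)).const_add (u t i)
    have h2 : HasDerivAt (fun α : ℝ => u t j + α * Δu t j) (Δu t j) 0 := by
      simpa using ((hasDerivAt_id (0 : ℝ)).mul_const (Δu t j)).const_add (u t j)
    have h3 := h1.mul ((hGd t i j).mul h2)
    refine h3.congr_deriv ?_
    change Δu t i * (G (x t + (0:ℝ) • Δx t) i j * (u t j + 0 * Δu t j)) + _ = _
    simp only [zero_mul, add_zero, zero_smul]
  have hderiv0 : deriv (fun α : ℝ => energy d T G (fun t => x t + α • Δx t)) 0 = S :=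
    key.deriv
  -- relation between the linearization and the gradient
  have hLgrad : ∀ t, (L t) (Δx t)
      = Δx t ⬝ᵥ (gradient (fun y => u t ⬝ᵥ (G y).mulVec (u t)) (x t)
          : EuclideanSpace ℝ (Fin d)) := by
    intro t
    have hq : HasFDerivAt (fun y => u t ⬝ᵥ (G y).mulVec (u t)) (L t) (x t) := by
      have h : (fun y : EuclideanSpace ℝ (Fin d) => u t ⬝ᵥ (G y).mulVec (u t))
          = fun y => ∑ i : Fin d, ∑ j : Fin d, (u t i * u t j) * G y i j := by
        funext y
        rw [hdot]
        exact Finset.sum_congr rfl fun i _ => Finset.sum_congr rfl fun j _ => by ring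
      rw [h, hL]
      refine HasFDerivAt.fun_sum fun i _ => HasFDerivAt.fun_sum fun j _ => ?_
      exact (((hGsmooth i j).differentiable (by simp)) (x t)).hasFDerivAt.const_mul _
    have h2 : (inner ℝ (gradient (fun y => u t ⬝ᵥ (G y).mulVec (u t)) (x t)) (Δx t) : ℝ)
        = (fderiv ℝ (fun y => u t ⬝ᵥ (G y).mulVec (u t)) (x t)) (Δx t) :=
      InnerProductSpace.toDual_symm_apply
    rw [hq.fderiv] at h2
    rw [← h2]
    rw [EuclideanSpace.inner_eq_star_dotProduct, star_trivial, dotProduct_comm]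
  -- symmetry
  have hsym : ∀ t, u t ⬝ᵥ (G (x t)).mulVec (Δu t) = Δu t ⬝ᵥ (G (x t)).mulVec (u t) := by
    intro t
    rw [dotProduct_mulVec, ← mulVec_transpose, (hGsym (x t)).eq, dotProduct_comm]
  -- dot product with μ
  have hμdot : ∀ t < T, ∀ v : Fin d → ℝ,
      v ⬝ᵥ (μ t : Fin d → ℝ) = -2 * (v ⬝ᵥ (G (x t)).mulVec (utilde t)) := by
    intro t ht v
    have h := hsys1 t ht
    have h2 : μ t = -((2 : ℝ) • toE d ((G (x t)).mulVec (utilde t))) :=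
      eq_neg_of_add_eq_zero_right h
    rw [h2, WithLp.ofLp_neg, dotProduct_neg, WithLp.ofLp_smul, dotProduct_smul]
    simp [toE, smul_eq_mul]
  -- telescoping identity
  set ν : ℕ → EuclideanSpace ℝ (Fin d) := fun t =>
    gradient (fun y => u t ⬝ᵥ (G y).mulVec (u t)) (x t) with hν
  have htel : ∑ t ∈ Finset.range T, (Δx t ⬝ᵥ (ν t : Fin d → ℝ))
      = ∑ t ∈ Finset.range T, (Δu t ⬝ᵥ (μ t : Fin d → ℝ)) := by
    set F : ℕ → ℝ := fun t => Δx t ⬝ᵥ (μ (t - 1) : Fin d → ℝ) with hF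
    have hstep : ∀ t < T, Δu t ⬝ᵥ (μ t : Fin d → ℝ) - Δx t ⬝ᵥ (ν t : Fin d → ℝ)
        = F (t + 1) - F t := by
      intro t ht
      match t with
      | 0 =>
        have hΔx1 : Δx 1 = Δu 0 := by rw [hΔx]; simp
        simp [hF, hΔx0, hΔx1, zero_dotProduct]
      | (k + 1) =>
        have hν' : ν (k + 1) = μ k - μ (k + 1) := by
          have := hsys2 (k + 1) (by omega) (by omega)
          simp only [Nat.add_sub_cancel] at this
          rw [hν]
          rw [← this]
          abel
        have hΔx2 : Δx (k + 2) = Δx (k + 1) + Δu (k + 1) := hΔxsucc (k + 1)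
        have hFk : F (k + 1) = Δx (k + 1) ⬝ᵥ (μ k : Fin d → ℝ) := by
          simp [hF]
        have hFk2 : F (k + 2) = Δx (k + 1) ⬝ᵥ (μ (k + 1) : Fin d → ℝ)
            + Δu (k + 1) ⬝ᵥ (μ (k + 1) : Fin d → ℝ) := by
          simp only [hF, show k + 2 - 1 = k + 1 from rfl]
          rw [hΔx2, WithLp.ofLp_add, add_dotProduct]
        rw [hν', WithLp.ofLp_sub, dotProduct_sub, hFk, hFk2]
        ring
    have hsum : ∑ t ∈ Finset.range T,
        (Δu t ⬝ᵥ (μ t : Fin d → ℝ) - Δx t ⬝ᵥ (ν t : Fin d → ℝ)) = 0 := by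
      have := Finset.sum_range_sub F T
      rw [Finset.sum_congr rfl fun t ht => hstep t (Finset.mem_range.mp ht), this]
      simp [hF, hΔx0, hΔxT, zero_dotProduct]
    rw [Finset.sum_sub_distrib] at hsum
    linarith
  -- the main identity
  have hmain : S = -2 * ∑ t ∈ Finset.range T, Δu t ⬝ᵥ (G (x t)).mulVec (Δu t) := by
    have e1 : S = ∑ t ∈ Finset.range T,
        (2 * (Δu t ⬝ᵥ (G (x t)).mulVec (u t)) + Δx t ⬝ᵥ (ν t : Fin d → ℝ)) := by
      rw [hSdef]
      refine Finset.sum_congr rfl fun t _ => ?_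
      rw [hsym t, hLgrad t]
      ring
    rw [e1, Finset.sum_add_distrib, htel, ← Finset.sum_add_distrib, Finset.mul_sum]
    refine Finset.sum_congr rfl fun t ht => ?_
    rw [hμdot t (Finset.mem_range.mp ht), hΔu t, WithLp.ofLp_sub, mulVec_sub, dotProduct_sub]
    ring
  -- positivity facts
  have hnonneg : ∀ t ∈ Finset.range T, 0 ≤ Δu t ⬝ᵥ (G (x t)).mulVec (Δu t) := by
    intro t _
    have := (hGpos (x t)).posSemidef.dotProduct_mulVec_nonneg (Δu t)
    simpa using this
  have hc1 : deriv (fun α : ℝ => energy d T G (fun t => x t + α • Δx t)) 0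
      = -2 * ∑ t ∈ Finset.range T, Δu t ⬝ᵥ (G (x t)).mulVec (Δu t) := by
    rw [hderiv0, hmain]
  refine ⟨hc1, ?_, ?_⟩
  · rw [hc1]
    have := Finset.sum_nonneg hnonneg
    linarith
  · rw [hc1]
    constructor
    · intro h0
      have hsum0 : ∑ t ∈ Finset.range T, Δu t ⬝ᵥ (G (x t)).mulVec (Δu t) = 0 := by
        linarith
      intro t ht
      have hterm := (Finset.sum_eq_zero_iff_of_nonneg hnonneg).mp hsum0 t
        (Finset.mem_range.mpr ht)
      by_contra hne
      have hΔne : Δu t ≠ (0 : Fin d → ℝ) := by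
        rw [hΔu t]
        intro hz
        exact hne (sub_eq_zero.mp ((WithLp.ofLp_injective 2) hz))
      have := (hGpos (x t)).dotProduct_mulVec_pos hΔne
      simp only [star_trivial] at this
      rw [hterm] at this
      exact lt_irrefl 0 this
    · intro h
      have : ∑ t ∈ Finset.range T, Δu t ⬝ᵥ (G (x t)).mulVec (Δu t) = 0 := by
        refine Finset.sum_eq_zero fun t ht => ?_
        have hz : Δu t = (0 : Fin d → ℝ) := by
          rw [hΔu t, h t (Finset.mem_range.mp ht), sub_self, WithLp.ofLp_zero]
        rw [hz]
        simp
      rw [this]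
      ring
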